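/- arXiv:2006.07439 — 6 statements merged into one kernel-verified Lean document; each statement's English description precedes it below -/
import Mathlib

section
/- There exists a constant C > 0 such that for every ε > 0 there exists N such that for all n ≥ N, for every odd prime q with q ≤ n^{1/2}/(log n)^C, for every a ∈ (ℤ/qℤ)^n \ 𝓛(n,q) and every v ∈ (ℤ/qℤ)^n, one has |Pr[M_n · a = v] − q^{−n}| ≤ ε · q^{−n}, where the matrix–vector product is over ℤ/qℤ. -/
/-- The random symmetric ±1 matrix: the upper-triangular entries
(including diagonal) are determined by independent fair coin flips
`σ i j` for `i ≤ j`, and the matrix is symmetric. -/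
def signMatrix (n : ℕ) (σ : Fin n → Fin n → Bool) : Matrix (Fin n) (Fin n) ℤ :=
  fun i j => if σ (min i j) (max i j) then 1 else -1

/-- Probability, under the uniform distribution on symmetric ±1 matrices,
that the matrix satisfies `P`. -/
noncomputable def probSym (n : ℕ) (P : Matrix (Fin n) (Fin n) ℤ → Prop) : ℝ :=
  (Nat.card {σ : Fin n → Fin n → Bool // P (signMatrix n σ)} : ℝ) /
    Fintype.card (Fin n → Fin n → Bool)

/-- `a ∈ 𝓛(n,q)`: some level set of `a` has size at least `n - n/(log n)²`. -/
def inL (n q : ℕ) (a : Fin n → ZMod q) : Prop :=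
  ∃ r : ZMod q,
    (n : ℝ) - n / (Real.log n) ^ 2 ≤ (Finset.univ.filter (fun i => a i = r)).card


/-!
Fourier inversion over `(ZMod q)ⁿ` writes `qⁿ · Pr[M a = v]` as a sum over frequencies `ξ` of
`e(-ξ ⬝ᵥ v)` times the characteristic function of `ξ ⬝ᵥ M a`. As `ξ ⬝ᵥ M a` is a sum of
independent signs with coefficients `ξ i * a j + ξ j * a i` (`i < j`) and `ξ i * a i`, that
characteristic function is a product of cosines, and the term `ξ = 0` is `1`. For odd `q` each
nonzero coefficient contributes a factor at most `1 - 2 / q²`, and comparing the ratios `ξ i / a i`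
shows that at least `|supp ξ| (|supp a| - 2) / 4` coefficients are nonzero. Summing
`exp (-(|supp a| - 2) / (2 q²)) ^ |supp ξ|` over `ξ ≠ 0` gives `(1 + (q - 1) β)ⁿ - 1`, which is
small once `|supp a| > n / (log n)²` and `q ≤ √n / (log n)²`.
-/

open Finset Matrix

theorem AddChar.map_sum_eq_prod {A M ι : Type*} [AddCommMonoid A] [CommMonoid M]
    (ψ : AddChar A M) (s : Finset ι) (f : ι → A) :
    ψ (∑ i ∈ s, f i) = ∏ i ∈ s, ψ (f i) := by
  classical
  induction s using Finset.induction_on with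
  | empty => simp
  | insert i s hi ih => rw [sum_insert hi, prod_insert hi, ψ.map_add_eq_mul, ih]

theorem AddChar.sum_pi_apply_sum {A R ι κ : Type*} [AddCommMonoid A] [CommSemiring R]
    [Fintype ι] [DecidableEq ι] [Fintype κ] (ψ : AddChar A R) (f : ι → κ → A) :
    ∑ τ : ι → κ, ψ (∑ i, f i (τ i)) = ∏ i, ∑ k, ψ (f i k) := by
  simp only [ψ.map_sum_eq_prod, Fintype.prod_sum]

theorem sum_sum_eq_sum_sum_lt {ι M : Type*} [Fintype ι] [LinearOrder ι] [AddCommMonoid M]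
    (F : ι → ι → M) :
    ∑ i, ∑ j, F i j
      = ∑ i, ∑ j, if i < j then F i j + F j i else if i = j then F i i else 0 := by
  have hsplit (i j : ι) : F i j = ((if i < j then F i j else 0) + if j < i then F i j else 0)
      + if i = j then F i i else 0 := by
    rcases lt_trichotomy i j with h | rfl | h
    · simp [h, h.not_gt, h.ne]
    · simp
    · simp [h, h.not_gt, h.ne']
  have hcases (i j : ι) : (if i < j then F i j + F j i else if i = j then F i i else 0)
      = ((if i < j then F i j else 0) + if i < j then F j i else 0)
        + if i = j then F i i else 0 := by
    rcases lt_trichotomy i j with h | rfl | h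
    · simp [h, h.ne]
    · simp
    · simp [h.not_gt, h.ne']
  simp only [hcases, sum_add_distrib]
  conv_lhs => enter [2, i, 2, j]; rw [hsplit i j]
  simp only [sum_add_distrib]
  rw [sum_comm (f := fun i j => if j < i then F i j else 0)]

theorem card_filter_ne_eq_two_mul_card_filter_lt {ι : Type*} [Fintype ι] [LinearOrder ι]
    (P : ι → ι → Prop) [DecidableRel P] (hP : ∀ i j, P i j → P j i) :
    #{p : ι × ι | p.1 ≠ p.2 ∧ P p.1 p.2} = 2 * #{p : ι × ι | p.1 < p.2 ∧ P p.1 p.2} := by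
  have hswap : #{p : ι × ι | p.2 < p.1 ∧ P p.1 p.2} = #{p : ι × ι | p.1 < p.2 ∧ P p.1 p.2} :=
    card_equiv (Equiv.prodComm ι ι) fun p => by
      simp only [mem_filter, mem_univ, true_and, Equiv.prodComm_apply, Prod.fst_swap,
        Prod.snd_swap]
      exact and_congr_right fun _ => ⟨hP _ _, hP _ _⟩
  rw [two_mul]
  nth_rewrite 2 [← hswap]
  rw [← card_union_of_disjoint (disjoint_filter.2 fun p _ h h' => h.1.asymm h'.1), ← filter_or]
  congr 1
  ext p
  simp only [ne_iff_lt_or_gt, or_and_right]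

section SignCoeff

variable {R : Type*} [CommRing R] {n : ℕ}

/-- Positions below the diagonal do not enter `signMatrix`, so their coefficient is `0`. -/
def signCoeff (ξ a : Fin n → R) (p : Fin n × Fin n) : R :=
  if p.1 < p.2 then ξ p.1 * a p.2 + ξ p.2 * a p.1 else if p.1 = p.2 then ξ p.1 * a p.1 else 0

theorem dotProduct_signMatrix_mulVec (σ : Fin n → Fin n → Bool) (ξ a : Fin n → R) :
    ξ ⬝ᵥ ((signMatrix n σ).map (Int.cast : ℤ → R)) *ᵥ a
      = ∑ p : Fin n × Fin n, if σ p.1 p.2 then signCoeff ξ a p else -signCoeff ξ a p := by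
  simp only [dotProduct, mulVec, map_apply, signMatrix, mul_sum, ← univ_product_univ,
    sum_product]
  rw [sum_sum_eq_sum_sum_lt]
  refine sum_congr rfl fun i _ => sum_congr rfl fun j _ => ?_
  rcases lt_trichotomy i j with h | rfl | h
  · simp only [signCoeff, if_pos h, min_eq_left h.le, max_eq_right h.le, min_eq_right h.le,
      max_eq_left h.le]
    cases σ i j
    · simp [add_comm]
    · simp
  · simp only [min_self, max_self]
    cases σ i i <;> simp [signCoeff]
  · simp [signCoeff, h.not_gt, h.ne']

end SignCoeff

section Fourier

open ZMod

variable {q : ℕ} [NeZero q] {n : ℕ}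

theorem norm_stdAddChar (c : ZMod q) : ‖stdAddChar c‖ = 1 := by
  rw [stdAddChar_apply, Circle.norm_coe]

theorem sum_stdAddChar_dotProduct {ι : Type*} [Fintype ι] [DecidableEq ι] (w : ι → ZMod q) :
    ∑ ξ : ι → ZMod q, stdAddChar (ξ ⬝ᵥ w) = if w = 0 then (q : ℂ) ^ Fintype.card ι else 0 := by
  refine (AddChar.sum_pi_apply_sum _ fun i x => x * w i).trans ?_
  simp only [AddChar.sum_mulShift _ (isPrimitive_stdAddChar q), ZMod.card, apply_ite Nat.cast,
    Nat.cast_zero, prod_ite_zero, mem_univ, true_implies, prod_const, card_univ, funext_iff,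
    Pi.zero_apply]

theorem sum_stdAddChar_dotProduct_signMatrix_mulVec (ξ a : Fin n → ZMod q) :
    ∑ σ : Fin n → Fin n → Bool,
        stdAddChar (ξ ⬝ᵥ ((signMatrix n σ).map (Int.cast : ℤ → ZMod q)) *ᵥ a)
      = ∏ p, (stdAddChar (signCoeff ξ a p) + stdAddChar (-signCoeff ξ a p)) := by
  simp only [dotProduct_signMatrix_mulVec]
  rw [← (Equiv.curry (Fin n) (Fin n) Bool).sum_comp]
  refine (AddChar.sum_pi_apply_sum _
    fun p (b : Bool) => if b then signCoeff ξ a p else -signCoeff ξ a p).trans ?_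
  simp only [Fintype.sum_bool, if_true, Bool.false_eq_true, if_false]

theorem probSym_mulVec_mul_pow_eq_sum (a v : Fin n → ZMod q) :
    (probSym n (fun M => (M.map (Int.cast : ℤ → ZMod q)) *ᵥ a = v) : ℂ) * q ^ n
      = ∑ ξ, stdAddChar (-(ξ ⬝ᵥ v))
          * ∏ p, (stdAddChar (signCoeff ξ a p) + stdAddChar (-signCoeff ξ a p)) / 2 := by
  have hindicator (σ : Fin n → Fin n → Bool) :
      (if (signMatrix n σ).map (Int.cast : ℤ → ZMod q) *ᵥ a = v then (q : ℂ) ^ n else 0)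
        = ∑ ξ, stdAddChar (-(ξ ⬝ᵥ v))
            * stdAddChar (ξ ⬝ᵥ (signMatrix n σ).map (Int.cast : ℤ → ZMod q) *ᵥ a) := by
    simp only [← AddChar.map_add_eq_mul, neg_add_eq_sub, ← dotProduct_sub,
      sum_stdAddChar_dotProduct, sub_eq_zero, Fintype.card_fin]
  have hcard : (Fintype.card (Fin n → Fin n → Bool) : ℂ) = ∏ _p : Fin n × Fin n, (2 : ℂ) := by
    simp [pow_mul]
  rw [probSym, Nat.card_eq_fintype_card, Fintype.card_subtype, Complex.ofReal_div,
    Complex.ofReal_natCast, Complex.ofReal_natCast, div_mul_eq_mul_div, natCast_card_filter,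
    sum_mul]
  simp only [ite_mul, one_mul, zero_mul, hindicator]
  rw [sum_comm, hcard, sum_div]
  simp only [← mul_sum, sum_stdAddChar_dotProduct_signMatrix_mulVec, mul_div_assoc,
    prod_div_distrib]

theorem abs_probSym_mulVec_mul_pow_sub_one_le (a v : Fin n → ZMod q) :
    |probSym n (fun M => (M.map (Int.cast : ℤ → ZMod q)) *ᵥ a = v) * q ^ n - 1|
      ≤ ∑ ξ ∈ univ.erase 0,
          ∏ p, ‖(stdAddChar (signCoeff ξ a p) + stdAddChar (-signCoeff ξ a p)) / 2‖ := by
  have hzero : stdAddChar (-((0 : Fin n → ZMod q) ⬝ᵥ v))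
      * ∏ p, (stdAddChar (signCoeff 0 a p) + stdAddChar (-signCoeff 0 a p)) / 2 = 1 := by
    simp [signCoeff]
  calc _ = ‖(probSym n (fun M => (M.map (Int.cast : ℤ → ZMod q)) *ᵥ a = v) : ℂ) * q ^ n - 1‖ := by
        rw [← Real.norm_eq_abs, ← Complex.norm_real]; push_cast; rfl
    _ = ‖∑ ξ ∈ univ.erase 0, stdAddChar (-(ξ ⬝ᵥ v))
          * ∏ p, (stdAddChar (signCoeff ξ a p) + stdAddChar (-signCoeff ξ a p)) / 2‖ := by
        rw [probSym_mulVec_mul_pow_eq_sum, ← add_sum_erase _ _ (mem_univ 0), hzero,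
          add_sub_cancel_left]
    _ ≤ _ := (norm_sum_le _ _).trans_eq <| by
        simp only [norm_mul, norm_prod, norm_stdAddChar, one_mul]

end Fourier

section CharacterBound

open Real in
theorem abs_cos_pi_mul_div_le {m : ℤ} {q : ℕ} (hm : ¬ (q : ℤ) ∣ m) :
    |cos (π * m / q)| ≤ 1 - 2 / q ^ 2 := by
  -- shift by the nearest multiple `k π`; the remaining angle is at least `π / q` as `q ∤ m`
  set k := round ((m : ℝ) / q)
  set x := π * m / q - k * π with hxdef
  have hx : x = π * ((m - k * q : ℤ) / q) := by
    rcases eq_or_ne (q : ℝ) 0 with hq | hq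
    · simp [x, k, hq]
    · rw [hxdef]; push_cast; field_simp
  have hround : |x| ≤ π / 2 := by
    have : x = π * ((m : ℝ) / q - k) := by ring
    rw [this, abs_mul, abs_of_pos pi_pos]
    nlinarith [abs_sub_round ((m : ℝ) / q), pi_pos]
  have hdist : (1 : ℝ) ≤ ((m - k * q : ℤ) : ℝ) ^ 2 := by
    have : m - k * q ≠ 0 := fun h => hm ⟨k, by linarith⟩
    exact_mod_cast (one_le_sq_iff_one_le_abs _).2 (Int.one_le_abs this)
  have hcos : |cos (π * m / q)| = cos x := by
    rw [← abs_of_nonneg (cos_nonneg_of_mem_Icc ⟨(abs_le.1 hround).1, (abs_le.1 hround).2⟩),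
      hxdef, cos_sub_int_mul_pi, abs_mul, abs_neg_one_zpow, one_mul]
  calc |cos (π * m / q)| = cos x := hcos
    _ ≤ 1 - 2 / π ^ 2 * x ^ 2 := cos_le_one_sub_mul_cos_sq (by linarith [pi_pos])
    _ = 1 - 2 * ((m - k * q : ℤ) : ℝ) ^ 2 / q ^ 2 := by
        rw [hx]; field_simp
    _ ≤ 1 - 2 / q ^ 2 := by gcongr; linarith

open ZMod

variable {q : ℕ} [NeZero q]

theorem stdAddChar_add_stdAddChar_neg_div_two (m : ℤ) :
    (stdAddChar (m : ZMod q) + stdAddChar (-(m : ZMod q))) / 2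
      = (Real.cos (Real.pi * (2 * m : ℤ) / q) : ℂ) := by
  rw [← Int.cast_neg, stdAddChar_coe, stdAddChar_coe, Complex.ofReal_cos, Complex.cos]
  congr 3 <;> push_cast <;> ring

theorem norm_stdAddChar_add_stdAddChar_neg_div_two_le_one (c : ZMod q) :
    ‖(stdAddChar c + stdAddChar (-c)) / 2‖ ≤ 1 := by
  rw [norm_div, Complex.norm_two, div_le_one two_pos]
  exact (norm_add_le _ _).trans_eq (by rw [norm_stdAddChar, norm_stdAddChar, one_add_one_eq_two])

theorem norm_stdAddChar_add_stdAddChar_neg_div_two_le [Fact q.Prime] (hq : q ≠ 2) {c : ZMod q}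
    (hc : c ≠ 0) : ‖(stdAddChar c + stdAddChar (-c)) / 2‖ ≤ 1 - 2 / q ^ 2 := by
  have h2 : (2 : ZMod q) ≠ 0 := Ring.two_ne_zero (by rwa [ZMod.ringChar_zmod_n])
  obtain ⟨m, rfl⟩ : ∃ m : ℤ, (m : ZMod q) = c := ⟨_, intCast_zmod_cast c⟩
  rw [stdAddChar_add_stdAddChar_neg_div_two, Complex.norm_real, Real.norm_eq_abs]
  refine abs_cos_pi_mul_div_le fun hdvd => mul_ne_zero h2 hc ?_
  simpa using (intCast_zmod_eq_zero_iff_dvd (2 * m) q).2 hdvd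

end CharacterBound

section PairsOfRatios

variable {ι G : Type*} [AddGroup G] [Fintype G] [DecidableEq G]

theorem sum_card_filter_eq_neg_le_sum_card_filter_eq (s : Finset ι) (r : ι → G) :
    ∑ i ∈ s, #{j ∈ s | r j = -r i} ≤ ∑ i ∈ s, #{j ∈ s | r j = r i} := by
  set g : G → ℕ := fun v => #{i ∈ s | r i = v}
  have hfiber (φ : G → G) : ∑ i ∈ s, #{j ∈ s | r j = φ (r i)} = ∑ v, g v * g (φ v) := by
    rw [← sum_fiberwise s r]
    refine sum_congr rfl fun v _ => ?_
    rw [sum_congr rfl fun i hi => by rw [(mem_filter.1 hi).2], sum_const, smul_eq_mul]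
  have hneg : ∑ v, g (-v) * g (-v) = ∑ v, g v * g v :=
    Fintype.sum_equiv (Equiv.neg G) _ _ fun _ => rfl
  have hamgm : 2 * ∑ v, g v * g (-v) ≤ 2 * ∑ v, g v * g v :=
    calc 2 * ∑ v, g v * g (-v) = ∑ v, 2 * (g v * g (-v)) := mul_sum _ _ _
      _ ≤ ∑ v, (g v * g v + g (-v) * g (-v)) :=
          sum_le_sum fun v _ => by nlinarith [sq_nonneg ((g v : ℤ) - g (-v))]
      _ = 2 * ∑ v, g v * g v := by rw [sum_add_distrib, hneg, two_mul]
  calc _ = ∑ v, g v * g (-v) := hfiber _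
    _ ≤ ∑ v, g v * g v := by omega
    _ = _ := (hfiber id).symm

theorem two_mul_sum_card_filter_eq_neg_le (s : Finset ι) (r : ι → G)
    (hr : ∀ i ∈ s, r i ≠ -r i) :
    2 * ∑ i ∈ s, #{j ∈ s | r j = -r i} ≤ #s * #s := by
  classical
  have hrow (i : ι) (hi : i ∈ s) : #{j ∈ s | r j = -r i} + #{j ∈ s | r j = r i} ≤ #s := by
    rw [← card_union_of_disjoint
      (disjoint_filter.2 fun j _ hneg heq => hr i hi (heq.symm.trans hneg))]
    exact card_le_card (union_subset (filter_subset _ _) (filter_subset _ _))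
  calc 2 * ∑ i ∈ s, #{j ∈ s | r j = -r i}
      ≤ ∑ i ∈ s, #{j ∈ s | r j = -r i} + ∑ i ∈ s, #{j ∈ s | r j = r i} := by
        rw [two_mul]
        exact add_le_add_right (sum_card_filter_eq_neg_le_sum_card_filter_eq s r) _
    _ ≤ ∑ _i ∈ s, #s := by rw [← sum_add_distrib]; exact sum_le_sum hrow
    _ = #s * #s := by rw [sum_const, smul_eq_mul]

end PairsOfRatios

theorem card_mul_card_le_card_offDiag_coeff_ne_zero {ι K : Type*} [Fintype ι] [DecidableEq ι]
    [Field K] [Fintype K] [DecidableEq K] (h2 : (2 : K) ≠ 0) (ξ a : ι → K) :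
    #{i | ξ i ≠ 0} * #{i | a i ≠ 0}
      ≤ 2 * (#{p : ι × ι | p.1 ≠ p.2 ∧ ξ p.1 * a p.2 + ξ p.2 * a p.1 ≠ 0} + #{i | ξ i ≠ 0}) := by
  set X : Finset ι := {i | ξ i ≠ 0}
  set S : Finset ι := {i | a i ≠ 0}
  set A : Finset ι := {i ∈ X | a i ≠ 0}
  set B : Finset ι := {i ∈ X | ¬ a i ≠ 0}
  set row : ι → ℕ := fun i => #{j | i ≠ j ∧ ξ i * a j + ξ j * a i ≠ 0}
  set r : ι → K := fun i => ξ i / a i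
  -- Rows `i` with `a i = 0` are nonzero on all of `S`. For `i ∈ A` the coefficient at `j ∈ S`
  -- vanishes only if `j = i` or `r j = -r i`, and at most half of the pairs in `A` satisfy the
  -- latter.
  have hD : #{p : ι × ι | p.1 ≠ p.2 ∧ ξ p.1 * a p.2 + ξ p.2 * a p.1 ≠ 0} = ∑ i, row i := by
    simp only [row, card_filter, Fintype.sum_prod_type]
  have hB (i : ι) (hi : i ∈ B) : #S ≤ row i := by
    simp only [B, X, mem_filter, mem_univ, true_and, not_not] at hi
    refine card_le_card fun j hj => ?_
    simp only [S, mem_filter, mem_univ, true_and] at hj ⊢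
    exact ⟨fun h => hj (h ▸ hi.2), by simpa [hi.2] using mul_ne_zero hi.1 hj⟩
  have hA (i : ι) (hi : i ∈ A) : #S ≤ row i + 1 + #{j ∈ A | r j = -r i} := by
    simp only [A, X, mem_filter, mem_univ, true_and] at hi
    obtain ⟨hξi, hai⟩ := hi
    have hcover : S ⊆ ({j | i ≠ j ∧ ξ i * a j + ξ j * a i ≠ 0} : Finset ι) ∪ {i}
        ∪ {j ∈ A | r j = -r i} := by
      intro j hj
      simp only [S, mem_filter, mem_univ, true_and] at hj
      by_cases hij : i = j
      · simp [hij]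
      by_cases hs : ξ i * a j + ξ j * a i = 0
      · have hξj : ξ j ≠ 0 := fun h => mul_ne_zero hξi hj (by simpa [h] using hs)
        refine mem_union_right _ (mem_filter.2 ⟨by simp [A, X, hξj, hj], ?_⟩)
        simp only [r]
        field_simp
        linear_combination hs
      · exact mem_union_left _ (mem_union_left _ (mem_filter.2 ⟨mem_univ _, hij, hs⟩))
    calc #S ≤ _ := card_le_card hcover
      _ ≤ #(({j | i ≠ j ∧ ξ i * a j + ξ j * a i ≠ 0} : Finset ι) ∪ {i})
          + #{j ∈ A | r j = -r i} := card_union_le _ _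
      _ ≤ row i + #{i} + #{j ∈ A | r j = -r i} := by gcongr; exact card_union_le _ _
      _ = _ := by rw [card_singleton]
  have hAA : 2 * ∑ i ∈ A, #{j ∈ A | r j = -r i} ≤ #A * #A := by
    refine two_mul_sum_card_filter_eq_neg_le A r fun i hi h => ?_
    simp only [A, X, mem_filter, mem_univ, true_and] at hi
    have h2r : (2 : K) * r i = 0 := by linear_combination h
    exact div_ne_zero hi.1 hi.2 ((mul_eq_zero.1 h2r).resolve_left h2)
  have hAS : #A ≤ #S := card_le_card fun i hi => by simp_all [A, S]
  have hX : #A + #B = #X := card_filter_add_card_filter_not _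
  have hrows : ∑ i ∈ A, row i + ∑ i ∈ B, row i ≤ ∑ i, row i := by
    rw [sum_filter_add_sum_filter_not]
    exact sum_le_sum_of_subset (subset_univ X)
  have hsumA := sum_le_sum hA
  have hsumB := sum_le_sum hB
  simp only [sum_add_distrib, sum_const, smul_eq_mul, mul_one] at hsumA hsumB
  rw [hD, ← hX]
  nlinarith

theorem card_mul_card_le_card_signCoeff_ne_zero {K : Type*} [Field K] [Fintype K]
    [DecidableEq K] {n : ℕ} (h2 : (2 : K) ≠ 0) (ξ a : Fin n → K) :
    #{i | ξ i ≠ 0} * #{i | a i ≠ 0} ≤ 4 * #{p | signCoeff ξ a p ≠ 0} + 2 * #{i | ξ i ≠ 0} := by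
  have hlt : #{p : Fin n × Fin n | p.1 < p.2 ∧ ξ p.1 * a p.2 + ξ p.2 * a p.1 ≠ 0}
      ≤ #{p | signCoeff ξ a p ≠ 0} :=
    card_le_card fun p hp => by
      simp only [mem_filter, mem_univ, true_and] at hp ⊢
      rw [signCoeff, if_pos hp.1]
      exact hp.2
  have := card_mul_card_le_card_offDiag_coeff_ne_zero h2 ξ a
  rw [card_filter_ne_eq_two_mul_card_filter_lt
    (fun i j => ξ i * a j + ξ j * a i ≠ 0) fun i j h => by rwa [add_comm]] at this
  omega

theorem prod_le_pow_card_filter {ι : Type*} {f : ι → ℝ} {s : Finset ι} (P : ι → Prop)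
    [DecidablePred P] {b : ℝ} (hf0 : ∀ i ∈ s, 0 ≤ f i) (hf1 : ∀ i ∈ s, f i ≤ 1)
    (hb : ∀ i ∈ s, P i → f i ≤ b) :
    ∏ i ∈ s, f i ≤ b ^ #{i ∈ s | P i} := by
  rw [← prod_filter_mul_prod_filter_not s P]
  calc (∏ i ∈ s with P i, f i) * ∏ i ∈ s with ¬P i, f i ≤ (∏ i ∈ s with P i, f i) * 1 := by
        refine mul_le_mul_of_nonneg_left ?_ (prod_nonneg fun i hi => hf0 i (mem_filter.1 hi).1)
        exact prod_le_one (fun i hi => hf0 i (mem_filter.1 hi).1)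
          fun i hi => hf1 i (mem_filter.1 hi).1
    _ ≤ ∏ i ∈ s with P i, b := by
        rw [mul_one]
        exact prod_le_prod (fun i hi => hf0 i (mem_filter.1 hi).1)
          fun i hi => hb i (mem_filter.1 hi).1 (mem_filter.1 hi).2
    _ = b ^ #{i ∈ s | P i} := prod_const b

theorem sum_pow_card_support {ι R : Type*} [Fintype ι] [DecidableEq ι] [Fintype R] [Zero R]
    [DecidableEq R] (β : ℝ) :
    ∑ ξ : ι → R, β ^ #{i | ξ i ≠ 0} = (1 + (Fintype.card R - 1) * β) ^ Fintype.card ι := by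
  have hpow (ξ : ι → R) : β ^ #{i | ξ i ≠ 0} = ∏ i, if ξ i ≠ 0 then β else 1 := by
    rw [prod_ite, prod_const, prod_const_one, mul_one]
  have hsum : ∑ x : R, (if x ≠ 0 then β else 1) = 1 + (Fintype.card R - 1) * β := by
    rw [sum_ite, sum_const, sum_const, filter_ne', card_erase_of_mem (mem_univ _), card_univ,
      nsmul_eq_mul, nsmul_eq_mul, Nat.cast_pred Fintype.card_pos]
    simp [filter_eq', add_comm]
  simp only [hpow]
  rw [← Fintype.prod_sum (fun (_ : ι) (x : R) => if x ≠ 0 then β else 1), hsum, prod_const,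
    card_univ]

open ZMod in
theorem prod_norm_le_pow_card_support {q n : ℕ} [Fact q.Prime] (hq : q ≠ 2)
    (ξ a : Fin n → ZMod q) :
    ∏ p, ‖(stdAddChar (signCoeff ξ a p) + stdAddChar (-signCoeff ξ a p)) / 2‖
      ≤ Real.exp (-((#{i | a i ≠ 0} - 2) / (2 * q ^ 2))) ^ #{i | ξ i ≠ 0} := by
  have hq2 : (4 : ℝ) ≤ q ^ 2 := by
    have : (2 : ℝ) ≤ q := by exact_mod_cast (Fact.out : q.Prime).two_le
    nlinarith
  have hcount : (#{i | ξ i ≠ 0} * (#{i | a i ≠ 0} - 2) : ℝ) ≤ 4 * #{p | signCoeff ξ a p ≠ 0} := by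
    have := card_mul_card_le_card_signCoeff_ne_zero
      (Ring.two_ne_zero (by rwa [ZMod.ringChar_zmod_n])) ξ a
    have : (#{i | ξ i ≠ 0} * #{i | a i ≠ 0} : ℝ)
        ≤ 4 * #{p | signCoeff ξ a p ≠ 0} + 2 * #{i | ξ i ≠ 0} := by exact_mod_cast this
    linarith
  calc _ ≤ (1 - 2 / (q : ℝ) ^ 2) ^ #{p | signCoeff ξ a p ≠ 0} :=
        prod_le_pow_card_filter _ (fun _ _ => norm_nonneg _)
          (fun _ _ => norm_stdAddChar_add_stdAddChar_neg_div_two_le_one _)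
          fun _ _ => norm_stdAddChar_add_stdAddChar_neg_div_two_le hq
    _ ≤ Real.exp (-(2 / (q : ℝ) ^ 2)) ^ #{p | signCoeff ξ a p ≠ 0} := by
        gcongr
        · rw [sub_nonneg, div_le_one (by positivity)]; linarith
        · linarith [Real.add_one_le_exp (-(2 / (q : ℝ) ^ 2))]
    _ ≤ _ := by
        rw [← Real.exp_nat_mul, ← Real.exp_nat_mul, Real.exp_le_exp, mul_neg, mul_neg,
          neg_le_neg_iff, mul_div_assoc', mul_div_assoc',
          div_le_div_iff₀ (by positivity) (by positivity)]
        nlinarith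

open ZMod in
theorem abs_probSym_mulVec_mul_pow_sub_one_le_of_prime {q n : ℕ} [Fact q.Prime] (hq : q ≠ 2)
    (a v : Fin n → ZMod q) :
    |probSym n (fun M => (M.map (Int.cast : ℤ → ZMod q)) *ᵥ a = v) * q ^ n - 1|
      ≤ (1 + (q - 1) * Real.exp (-((#{i | a i ≠ 0} - 2) / (2 * q ^ 2)))) ^ n - 1 :=
  calc _ ≤ ∑ ξ ∈ univ.erase 0,
        ∏ p, ‖(stdAddChar (signCoeff ξ a p) + stdAddChar (-signCoeff ξ a p)) / 2‖ :=
        abs_probSym_mulVec_mul_pow_sub_one_le a v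
    _ ≤ ∑ ξ ∈ univ.erase 0,
        Real.exp (-((#{i | a i ≠ 0} - 2) / (2 * q ^ 2))) ^ #{i | ξ i ≠ 0} :=
        sum_le_sum fun ξ _ => prod_norm_le_pow_card_support hq ξ a
    _ = _ := by
        rw [sum_erase_eq_sub (mem_univ _), sum_pow_card_support, ZMod.card, Fintype.card_fin]
        simp

open Real Filter in
theorem eventually_mul_mul_exp_le {δ : ℝ} (hδ : 0 < δ) :
    ∀ᶠ n : ℕ in atTop, ∀ q s : ℝ, 0 < q → q ≤ √n / log n ^ 2 → n / log n ^ 2 < s →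
      n * q * exp (-((s - 2) / (2 * q ^ 2))) ≤ δ := by
  have hlog := tendsto_log_atTop.comp (tendsto_natCast_atTop_atTop (R := ℝ))
  have hpow : ∀ᶠ n : ℕ in atTop, log n ^ 4 / n ≤ 1 := by
    have := (tendsto_pow_log_div_mul_add_atTop 1 0 4 one_ne_zero).comp
      (tendsto_natCast_atTop_atTop (R := ℝ))
    filter_upwards [this.eventually_le_const one_pos] with n hn
    simpa using hn
  filter_upwards [hlog.eventually_ge_atTop (6 + 2 * |log δ|), hpow] with n hL hpow q s hq hqn hs
  set L := log (n : ℝ)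
  replace hL : 6 + 2 * |log δ| ≤ L := hL
  have hL6 : 6 ≤ L := by linarith [abs_nonneg (log δ)]
  have hn : (0 : ℝ) < n := Nat.cast_pos.2 (Nat.pos_of_ne_zero fun h => by
    simp [L, h] at hL6
    linarith)
  set m := (n : ℝ) / L ^ 4
  have hm : 1 ≤ m := by
    rw [le_div_iff₀ (by positivity), one_mul]; rwa [div_le_one hn] at hpow
  have hmL : (n : ℝ) / L ^ 2 = m * L ^ 2 := by simp only [m]; field_simp
  have hqm : q ^ 2 ≤ m := by
    calc q ^ 2 ≤ (√n / L ^ 2) ^ 2 := pow_le_pow_left₀ hq.le hqn 2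
      _ = m := by rw [div_pow, sq_sqrt hn.le, ← pow_mul]
  have hqle : q ≤ n := by
    nlinarith [div_le_self hn.le (one_le_pow₀ (n := 4) (by linarith : 1 ≤ L))]
  have hexp : L ^ 2 / 2 - 1 ≤ (s - 2) / (2 * q ^ 2) := by
    rw [le_div_iff₀ (by positivity)]
    rw [hmL] at hs
    nlinarith [mul_le_mul_of_nonneg_left hqm (by nlinarith : (0 : ℝ) ≤ L ^ 2 - 2)]
  calc n * q * exp (-((s - 2) / (2 * q ^ 2))) ≤ exp L * exp L * exp (-(L ^ 2 / 2 - 1)) := by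
        rw [exp_log hn]; gcongr
    _ = exp (2 * L + 1 - L ^ 2 / 2) := by rw [← exp_add, ← exp_add]; ring_nf
    _ ≤ exp (log δ) := by
        have := mul_le_mul hL6 (by linarith : 2 + 2 * |log δ| ≤ L - 4) (by positivity)
          (by linarith)
        exact exp_le_exp.2 (by nlinarith [neg_abs_le (log δ)])
    _ = δ := exp_log hδ

theorem one_add_pow_sub_one_le {x ε : ℝ} {n : ℕ} (hx : 0 ≤ x) (hε : 0 < ε)
    (h : n * x ≤ Real.log (1 + ε)) : (1 + x) ^ n - 1 ≤ ε := by
  have : (1 + x) ^ n ≤ 1 + ε :=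
    calc (1 + x) ^ n ≤ Real.exp x ^ n := by
          gcongr; linarith [Real.add_one_le_exp x]
      _ = Real.exp (n * x) := (Real.exp_nat_mul x n).symm
      _ ≤ 1 + ε := by rwa [← Real.le_log_iff_exp_le (by linarith)]
  linarith

theorem abs_sub_zpow_neg {x y : ℝ} (hy : 0 < y) (n : ℕ) :
    |x - y ^ (-(n : ℤ))| = |x * y ^ n - 1| * y ^ (-(n : ℤ)) := by
  rw [← abs_of_pos (zpow_pos hy (-(n : ℤ))), ← abs_mul, abs_of_pos (zpow_pos hy _),
    _root_.zpow_neg, zpow_natCast]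
  congr 1
  field_simp

theorem lt_card_filter_ne_zero_of_not_inL {n q : ℕ} {a : Fin n → ZMod q} (ha : ¬ inL n q a) :
    (n : ℝ) / Real.log n ^ 2 < #{i | a i ≠ 0} := by
  have hzero : (#{i | a i = 0} : ℝ) < n - n / Real.log n ^ 2 := not_le.1 fun h => ha ⟨0, h⟩
  have hsplit : (#{i | a i = 0} + #{i | a i ≠ 0} : ℝ) = n := by
    exact_mod_cast (card_filter_add_card_filter_not (s := univ) fun i => a i = 0).trans
      (card_fin n)
  linarith

/-- There is a constant `C > 0` such that for every `ε > 0`, for all large enough `n`,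
every odd prime `q ≤ n^(1/2)/(log n)^C`, every `a ∉ 𝓛(n,q)` and every
`v ∈ (ℤ/qℤ)^n`, we have `|Pr[M_n · a = v] - q^(-n)| ≤ ε · q^(-n)`. -/
theorem key_lemma :
    ∃ C > (0 : ℝ), ∀ ε > (0 : ℝ), ∃ N : ℕ, ∀ n : ℕ, N ≤ n → ∀ q : ℕ,
      q.Prime → q ≠ 2 → (q : ℝ) ≤ Real.sqrt n / (Real.log n) ^ C →
      ∀ a : Fin n → ZMod q, ¬ inL n q a → ∀ v : Fin n → ZMod q,
        |probSym n (fun M => (M.map (Int.cast : ℤ → ZMod q)).mulVec a = v)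
            - (q : ℝ) ^ (-(n : ℤ))|
          ≤ ε * (q : ℝ) ^ (-(n : ℤ)) := by
  refine ⟨2, two_pos, fun ε hε => ?_⟩
  obtain ⟨N, hN⟩ := Filter.eventually_atTop.1
    (eventually_mul_mul_exp_le (Real.log_pos (by linarith : 1 < 1 + ε)))
  refine ⟨N, fun n hn q hq hq2 hqn a ha v => ?_⟩
  have := Fact.mk hq
  have hq1 : (1 : ℝ) < q := by exact_mod_cast hq.one_lt
  have hβ := Real.exp_pos (-((#{i | a i ≠ 0} - 2) / (2 * (q : ℝ) ^ 2)))
  have hsmall := hN n hn q _ (by linarith) (by rwa [Real.rpow_two] at hqn)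
    (lt_card_filter_ne_zero_of_not_inL ha)
  have hfinite := (abs_probSym_mulVec_mul_pow_sub_one_le_of_prime hq2 a v).trans
    (one_add_pow_sub_one_le (mul_nonneg (by linarith) hβ.le) hε (by nlinarith))
  rw [abs_sub_zpow_neg (by linarith)]
  exact mul_le_mul_of_nonneg_right hfinite (zpow_pos (by linarith) _).le
end

section
/- Let n ≥ 3, let q be a prime, let a ∈ (ℤ/qℤ)^n with a ∉ 𝓛(n,q), and let ℓ ∈ (ℤ/qℤ)^n be a vector whose support has size s with s < n/(2(log n)²). Then there are at least s·n/(2(log n)²) pairs 1 ≤ i < j ≤ n for which ℓ_i·a_j + ℓ_j·a_i ≠ 0 in ℤ/qℤ. -/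
/-!
Let `S` be the support of `ℓ` and `T` the set of indices where `a` is nonzero and `ℓ` vanishes.
For `i ∈ S` and `j ∈ T` the expression `ℓ_i a_j + ℓ_j a_i = ℓ_i a_j` is a product of two nonzero
elements of the field `ℤ/qℤ`, so each such pair (put in increasing order) is counted, and distinct
pairs stay distinct because `S` and `T` are disjoint. Since `a ∉ 𝓛(n,q)`, the zero level set of `a`
has fewer than `n - n/(log n)²` elements, hence `|T| > n/(log n)² - |S| > n/(2 (log n)²)`.
-/

open Finset

theorem Finset.card_mul_card_le_card_filter_lt_of_disjoint {α : Type*} [LinearOrder α]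
    [Fintype α] {S T : Finset α} (hST : Disjoint S T) (R : α → α → Prop) [DecidableRel R]
    (hR : ∀ i j, R i j → R j i) (hRST : ∀ i ∈ S, ∀ j ∈ T, R i j) :
    #S * #T ≤ #{p : α × α | p.1 < p.2 ∧ R p.1 p.2} := by
  rw [← card_product]
  have hne : ∀ p ∈ S ×ˢ T, p.1 ≠ p.2 := fun p hp h =>
    disjoint_left.mp hST (mem_product.mp hp).1 (h ▸ (mem_product.mp hp).2)
  refine card_le_card_of_injOn (fun p => if p.1 < p.2 then p else p.swap) ?_ ?_
  · intro p hp
    have hRp := hRST _ (mem_product.mp hp).1 _ (mem_product.mp hp).2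
    by_cases h : p.1 < p.2
    · simpa [h] using hRp
    · simpa [h, lt_of_le_of_ne (not_lt.mp h) (hne p hp).symm] using hR _ _ hRp
  · intro p hp p' hp' heq
    have hswap : ∀ {x y : α × α}, x ∈ S ×ˢ T → y ∈ S ×ˢ T → x ≠ y.swap := fun hx hy h =>
      disjoint_left.mp hST (mem_product.mp hx).1 (h ▸ (mem_product.mp hy).2)
    by_cases h : p.1 < p.2 <;> by_cases h' : p'.1 < p'.2 <;>
      simp only [h, h', if_true, if_false] at heq
    · exact heq
    · exact absurd heq (hswap hp hp')
    · exact absurd heq.symm (hswap hp' hp)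
    · exact Prod.swap_injective heq

theorem Finset.card_sub_card_sub_card_le_card_compl_union {α : Type*} [Fintype α] [DecidableEq α]
    (s t : Finset α) : (Fintype.card α : ℝ) - #s - #t ≤ #(s ∪ t)ᶜ := by
  have hcompl := card_compl_add_card (s ∪ t)
  have hunion := card_union_le s t
  have : Fintype.card α ≤ #(s ∪ t)ᶜ + #s + #t := by omega
  have : (Fintype.card α : ℝ) ≤ #(s ∪ t)ᶜ + #s + #t := by exact_mod_cast this
  linarith

theorem small_support_pairs_general (n q : ℕ) (hq : q.Prime)
    (a ℓ : Fin n → ZMod q) (ha : ¬ inL n q a)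
    (hs : ((Finset.univ.filter (fun i => ℓ i ≠ 0)).card : ℝ)
        < n / (2 * (Real.log n) ^ 2)) :
    (((Finset.univ.filter (fun i => ℓ i ≠ 0)).card : ℝ) * n) / (2 * (Real.log n) ^ 2)
      ≤ (Finset.univ.filter (fun p : Fin n × Fin n =>
          p.1 < p.2 ∧ ℓ p.1 * a p.2 + ℓ p.2 * a p.1 ≠ 0)).card := by
  have := Fact.mk hq
  set L := Real.log n ^ 2
  set S : Finset (Fin n) := {i | ℓ i ≠ 0}
  set Z : Finset (Fin n) := {i | a i = 0}
  have hZ : (#Z : ℝ) < n - n / L := not_le.mp fun h => ha ⟨0, h⟩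
  have hT : (n : ℝ) / (2 * L) ≤ #(Z ∪ S)ᶜ := by
    have hcompl := card_sub_card_sub_card_le_card_compl_union Z S
    rw [Fintype.card_fin] at hcompl
    have hhalf : (n : ℝ) / L - n / (2 * L) = n / (2 * L) := by ring
    linarith
  have hpairs := card_mul_card_le_card_filter_lt_of_disjoint
    (disjoint_compl_right.mono_left subset_union_right : Disjoint S (Z ∪ S)ᶜ)
    (fun i j => ℓ i * a j + ℓ j * a i ≠ 0)
    (fun i j (h : ℓ i * a j + ℓ j * a i ≠ 0) => show ℓ j * a i + ℓ i * a j ≠ 0 by rwa [add_comm])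
    (fun i hi j hj => by
      simp only [S, Z, mem_compl, mem_union, mem_filter, mem_univ, true_and, not_or,
        not_not] at hi hj
      simpa [hj.2] using mul_ne_zero hi hj.1)
  calc (#S : ℝ) * n / (2 * L) = #S * (n / (2 * L)) := by ring
    _ ≤ #S * #(Z ∪ S)ᶜ := by gcongr
    _ ≤ _ := by exact_mod_cast hpairs

/-- If `a ∉ 𝓛(n,q)` and `ℓ` has support of size `s < n/(2 (log n)²)`, then there
are at least `s·n/(2 (log n)²)` pairs `i < j` with `ℓ_i a_j + ℓ_j a_i ≠ 0` in `ℤ/qℤ`. -/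
theorem small_support_pairs (n q : ℕ) (hn : 3 ≤ n) (hq : q.Prime)
    (a ℓ : Fin n → ZMod q) (ha : ¬ inL n q a)
    (hs : ((Finset.univ.filter (fun i => ℓ i ≠ 0)).card : ℝ)
        < n / (2 * (Real.log n) ^ 2)) :
    (((Finset.univ.filter (fun i => ℓ i ≠ 0)).card : ℝ) * n) / (2 * (Real.log n) ^ 2)
      ≤ (Finset.univ.filter (fun p : Fin n × Fin n =>
          p.1 < p.2 ∧ ℓ p.1 * a p.2 + ℓ p.2 * a p.1 ≠ 0)).card :=
  small_support_pairs_general n q hq a ℓ ha hs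
end

section
/- Let q be an odd prime, let a, ℓ ∈ (ℤ/qℤ)^n, and let V = {i ∈ [n] : a_i ≠ 0 and ℓ_i ≠ 0} with v = |V|. Then the number of pairs i < j with i, j ∈ V and ℓ_i·a_j + ℓ_j·a_i ≠ 0 in ℤ/qℤ is at least v(v−1)/2 − v²/4. -/
/-!
The pairs `i ≠ j` in `V` with `ℓ_i a_j + ℓ_j a_i = 0` form a triangle-free graph: multiplying
the three relations of a triangle `i, j, k` gives `P = -P` for `P = ℓ_i a_i ℓ_j a_j ℓ_k a_k ≠ 0`,
impossible when `2 ≠ 0`. By Mantel's theorem this graph has at most `v² / 4` edges, and the pairs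
counted in the theorem are the remaining ones among the `v (v - 1) / 2` pairs of `V`.
-/

open Finset

namespace SimpleGraph

variable {V : Type*} {G : SimpleGraph V}

theorem CliqueFree.four_mul_card_edgeFinset_le [Fintype V] [DecidableRel G.Adj]
    (h : G.CliqueFree 3) : 4 * #G.edgeFinset ≤ Fintype.card V ^ 2 := by
  obtain ⟨H, _, hH⟩ := exists_isTuranMaximal (V := V) two_pos
  have hGH : #G.edgeFinset ≤ #H.edgeFinset := hH.2 h
  rw [((isTuranMaximal_iff_nonempty_iso_turanGraph two_pos).mp hH).some.card_edgeFinset_eq] at hGH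
  have := mul_card_edgeFinset_turanGraph_le (n := Fintype.card V) (r := 2)
  omega

theorem CliqueFree.four_mul_card_edgeFinset_le_of_support_subset [Fintype V]
    [DecidableRel G.Adj] {s : Finset V} (h : G.CliqueFree 3) (hs : G.support ⊆ s) :
    4 * #G.edgeFinset ≤ #s ^ 2 := by
  classical
  rw [← card_edgeFinset_induce_of_support_subset hs]
  convert CliqueFree.four_mul_card_edgeFinset_le
    (h.comap (Embedding.induce (s : Set V)).isContained) using 3
  · simp
  · simp only [Finset.coe_sort_coe, Fintype.card_coe]

theorem card_filter_lt_adj [LinearOrder V] [Fintype V] [DecidableRel G.Adj] :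
    #{p : V × V | p.1 < p.2 ∧ G.Adj p.1 p.2} = #G.edgeFinset := by
  have hswap : #{p : V × V | p.2 < p.1 ∧ G.Adj p.1 p.2} =
      #{p : V × V | p.1 < p.2 ∧ G.Adj p.1 p.2} :=
    card_equiv (Equiv.prodComm V V) (by simp [G.adj_comm])
  have hsplit : #{p : V × V | p.1 < p.2 ∧ G.Adj p.1 p.2} +
      #{p : V × V | p.2 < p.1 ∧ G.Adj p.1 p.2} = #(univ.filter fun (x, y) ↦ G.Adj x y) := by
    rw [← card_union_of_disjoint (disjoint_filter.2 fun p _ h h' => h.1.asymm h'.1)]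
    congr 1
    ext ⟨x, y⟩
    simp only [mem_union, mem_filter, mem_univ, true_and]
    exact ⟨fun h => h.elim And.right And.right, fun h => h.ne.lt_or_gt.imp (⟨·, h⟩) (⟨·, h⟩)⟩
  have := G.two_mul_card_edgeFinset
  rw [← hsplit, hswap] at this
  omega

end SimpleGraph

section CrossGraph

variable {R ι : Type*} [CommRing R]

def crossGraph (a ℓ : ι → R) : SimpleGraph ι where
  Adj i j := i ≠ j ∧ (a i ≠ 0 ∧ ℓ i ≠ 0) ∧ (a j ≠ 0 ∧ ℓ j ≠ 0) ∧ ℓ i * a j + ℓ j * a i = 0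
  symm := ⟨fun _ _ ⟨hij, hi, hj, h⟩ => ⟨hij.symm, hj, hi, by rw [add_comm, h]⟩⟩

theorem crossGraph_adj {a ℓ : ι → R} {i j : ι} : (crossGraph a ℓ).Adj i j ↔
    i ≠ j ∧ (a i ≠ 0 ∧ ℓ i ≠ 0) ∧ (a j ≠ 0 ∧ ℓ j ≠ 0) ∧ ℓ i * a j + ℓ j * a i = 0 :=
  Iff.rfl

instance [DecidableEq R] [DecidableEq ι] (a ℓ : ι → R) : DecidableRel (crossGraph a ℓ).Adj :=
  fun _ _ => inferInstanceAs (Decidable (_ ∧ _))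

theorem crossGraph_cliqueFree_three [NoZeroDivisors R] (h2 : (2 : R) ≠ 0) (a ℓ : ι → R) :
    (crossGraph a ℓ).CliqueFree 3 := by
  classical
  intro t ht
  obtain ⟨i, j, k, hij, hik, hjk, -⟩ := SimpleGraph.is3Clique_iff.1 ht
  rw [crossGraph_adj] at hij hik hjk
  obtain ⟨-, ⟨hai, hℓi⟩, ⟨haj, hℓj⟩, hij⟩ := hij
  obtain ⟨-, -, ⟨hak, hℓk⟩, hik⟩ := hik
  obtain ⟨-, -, -, hjk⟩ := hjk
  have hprod : ℓ i * a i * (ℓ j * a j) * (ℓ k * a k) ≠ 0 := by simp [*]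
  have htwice : 2 * (ℓ i * a i * (ℓ j * a j) * (ℓ k * a k)) = 0 := by
    linear_combination (ℓ j * a k * (ℓ k * a i)) * hij - (ℓ j * a i * (ℓ k * a i)) * hjk +
      (ℓ j * a i * (ℓ k * a j)) * hik
  exact hprod ((mul_eq_zero.1 htwice).resolve_left h2)

end CrossGraph

/-- For an odd prime `q` and vectors `a, ℓ ∈ (ℤ/qℤ)^n`, letting
`V = {i : a_i ≠ 0 ∧ ℓ_i ≠ 0}` of size `v`, the number of pairs `i < j` in `V`
with `ℓ_i a_j + ℓ_j a_i ≠ 0` is at least `v(v-1)/2 - v²/4`. -/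
theorem mantel_pairs (n q : ℕ) (hq : q.Prime) (hq2 : q ≠ 2)
    (a ℓ : Fin n → ZMod q) :
    ((Finset.univ.filter (fun i => a i ≠ 0 ∧ ℓ i ≠ 0)).card : ℝ)
        * (((Finset.univ.filter (fun i => a i ≠ 0 ∧ ℓ i ≠ 0)).card : ℝ) - 1) / 2
      - ((Finset.univ.filter (fun i => a i ≠ 0 ∧ ℓ i ≠ 0)).card : ℝ) ^ 2 / 4
    ≤ ((Finset.univ.filter (fun p : Fin n × Fin n =>
          p.1 < p.2 ∧ (a p.1 ≠ 0 ∧ ℓ p.1 ≠ 0) ∧ (a p.2 ≠ 0 ∧ ℓ p.2 ≠ 0) ∧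
            ℓ p.1 * a p.2 + ℓ p.2 * a p.1 ≠ 0)).card : ℝ) := by
  have := Fact.mk hq
  set V := univ.filter (fun i => a i ≠ 0 ∧ ℓ i ≠ 0)
  set good := univ.filter (fun p : Fin n × Fin n => p.1 < p.2 ∧ (a p.1 ≠ 0 ∧ ℓ p.1 ≠ 0) ∧
    (a p.2 ≠ 0 ∧ ℓ p.2 ≠ 0) ∧ ℓ p.1 * a p.2 + ℓ p.2 * a p.1 ≠ 0)
  have hsplit : #good + #(crossGraph a ℓ).edgeFinset = (#V).choose 2 := by
    rw [← SimpleGraph.card_filter_lt_adj, ← card_product_filter_lt, ← card_union_of_disjoint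
      (disjoint_filter.2 fun _ _ h h' => h.2.2.2 (crossGraph_adj.1 h'.2).2.2.2)]
    congr 1
    ext p
    have hne := @ne_of_lt _ _ p.1 p.2
    simp [V, crossGraph_adj]
    tauto
  have hmantel : 4 * #(crossGraph a ℓ).edgeFinset ≤ #V ^ 2 :=
    (crossGraph_cliqueFree_three (Ring.two_ne_zero (by rwa [ZMod.ringChar_zmod_n])) a ℓ
      ).four_mul_card_edgeFinset_le_of_support_subset
        fun i ⟨_, h⟩ => by simpa [V] using (crossGraph_adj.1 h).2.1
  have hsplit' : (#good : ℝ) + #(crossGraph a ℓ).edgeFinset = #V * (#V - 1) / 2 := by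
    rw [← Nat.cast_choose_two, ← hsplit, Nat.cast_add]
  have hmantel' : 4 * (#(crossGraph a ℓ).edgeFinset : ℝ) ≤ #V ^ 2 := by exact_mod_cast hmantel
  linarith
end

section
/- Let q ≥ 2 be an integer and let m be an integer not divisible by q. Then |cos(πm/q)| ≤ e^{−2/q²}. -/
open Real

lemma abs_cos_le_cos_pi_div {q : ℕ} (hq : 2 ≤ q) {x : ℝ}
    (h1 : π / q ≤ x) (h2 : x ≤ π - π / q) : |Real.cos x| ≤ Real.cos (π / q) := by
  have hq0 : (0:ℝ) < q := by positivity
  have hpq : 0 ≤ π / q := by positivity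
  rcases le_or_gt x (π / 2) with hx | hx
  · rw [abs_of_nonneg (Real.cos_nonneg_of_mem_Icc ⟨by linarith [Real.pi_pos], hx⟩)]
    exact Real.cos_le_cos_of_nonneg_of_le_pi hpq (by linarith [Real.pi_pos]) h1
  · have hc : Real.cos x ≤ 0 := Real.cos_nonpos_of_pi_div_two_le_of_le hx.le
      (by linarith [Real.pi_pos])
    rw [abs_of_nonpos hc, ← Real.cos_pi_sub]
    exact Real.cos_le_cos_of_nonneg_of_le_pi hpq (by linarith [Real.pi_pos]) (by linarith)

/-- For an integer `q ≥ 2` and an integer `m` not divisible by `q`,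
`|cos(πm/q)| ≤ e^(-2/q²)`. -/
theorem cos_bound (q : ℕ) (hq : 2 ≤ q) (m : ℤ) (hm : ¬ ((q : ℤ) ∣ m)) :
    |Real.cos (Real.pi * m / q)| ≤ Real.exp (-2 / (q : ℝ) ^ 2) := by
  have hq0 : (0:ℝ) < q := by positivity
  have hqz : (q:ℤ) ≠ 0 := by positivity
  set r : ℤ := m % q with hr
  set k : ℤ := m / q with hk
  have hr0 : 0 < r := by
    rcases (Int.emod_nonneg m hqz).lt_or_eq with h | h
    · exact h
    · exact absurd (Int.dvd_of_emod_eq_zero h.symm) hm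
  have hrq : r < q := Int.emod_lt_of_pos m (by exact_mod_cast (by omega : 0 < q))
  have hmqr : m = q * k + r := (Int.mul_ediv_add_emod m q).symm
  have heq : Real.pi * m / q = k * π + π * r / q := by
    rw [hmqr]; push_cast; field_simp
  have habs : |Real.cos (Real.pi * m / q)| = |Real.cos (π * r / q)| := by
    rw [heq, Real.cos_add, Real.sin_int_mul_pi, zero_mul, sub_zero, abs_mul,
      Real.abs_cos_int_mul_pi, one_mul]
  rw [habs]
  have hr1 : (1:ℝ) ≤ r := by exact_mod_cast hr0
  have h1 : π / q ≤ π * r / q := by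
    apply div_le_div_of_nonneg_right ?_ hq0.le
    nlinarith [Real.pi_pos]
  have h2 : π * r / q ≤ π - π / q := by
    have hrq' : (r:ℝ) ≤ q - 1 := by exact_mod_cast (by omega : r ≤ (q:ℤ) - 1)
    rw [div_le_iff₀ hq0, sub_mul, div_mul_cancel₀ _ hq0.ne']
    nlinarith [Real.pi_pos]
  calc |Real.cos (π * r / q)| ≤ Real.cos (π / q) := abs_cos_le_cos_pi_div hq h1 h2
    _ ≤ 1 - 2 / π ^ 2 * (π / q) ^ 2 := by
        apply Real.cos_le_one_sub_mul_cos_sq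
        rw [abs_of_nonneg (by positivity)]
        rw [div_le_iff₀ hq0]
        nlinarith [Real.pi_pos,
          mul_le_mul_of_nonneg_left (by exact_mod_cast hq : (2:ℝ) ≤ q) Real.pi_pos.le]
    _ = 1 + (-2 / (q:ℝ)^2) := by
        have : π ^ 2 ≠ 0 := by positivity
        field_simp; ring
    _ ≤ Real.exp (-2 / (q:ℝ)^2) := by
        have := Real.add_one_le_exp (-2 / (q:ℝ)^2); linarith
end

section
/- Let q be an odd prime, let n ≥ 1, and let a, ℓ ∈ (ℤ/qℤ)^n. Then ∏_{1 ≤ i < j ≤ n} |cos(2π(ℓ_i a_j + ℓ_j a_i)/q)| ≤ e^{−2·N(ℓ,a)/q²}, where for x ∈ ℤ/qℤ the quantity cos(2πx/q) is evaluated at any integer representative of x. -/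
open Real

/-- Key pointwise bound: for odd prime `q` and `x ≠ 0` in `ZMod q`,
`|cos (2π x.val / q)| ≤ exp (-2/q²)`. -/
lemma cos_key_bound (q : ℕ) (hq : q.Prime) (hq2 : q ≠ 2) (x : ZMod q) (hx : x ≠ 0) :
    |Real.cos (2 * Real.pi * (x.val : ℝ) / q)| ≤ Real.exp (-2 / (q : ℝ) ^ 2) := by
  have hq1 : 1 < q := hq.one_lt
  have hq0 : (0 : ℝ) < q := by positivity
  have hq1' : (1 : ℝ) ≤ q := by exact_mod_cast hq1.le
  haveI : NeZero q := ⟨hq.pos.ne'⟩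
  have hv0 : x.val ≠ 0 := by simpa [ZMod.val_eq_zero] using hx
  have hnd : ¬ (q : ℤ) ∣ 2 * (x.val : ℤ) := by
    intro h
    rcases (Int.Prime.dvd_mul hq h) with h2 | hv
    · have h2' : q ∣ 2 := by simpa using h2
      have := Nat.le_of_dvd (by norm_num) h2'
      omega
    · rw [Int.natAbs_natCast] at hv
      exact hv0 (Nat.eq_zero_of_dvd_of_lt hv (ZMod.val_lt x))
  set k : ℤ := round ((2 * (x.val : ℝ)) / q) with hk
  set t : ℝ := (2 * (x.val : ℝ)) / q - k with ht
  have ht2 : |t| ≤ 1 / 2 := abs_sub_round _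
  have ht2' : -(1/2) ≤ t ∧ t ≤ 1/2 := abs_le.mp ht2
  have htlb : 1 / (q : ℝ) ≤ |t| := by
    have hm : (2 * (x.val : ℤ) - k * q) ≠ 0 := by
      intro h
      exact hnd ⟨k, by linarith⟩
    have hm1 : (1 : ℝ) ≤ |((2 * (x.val : ℤ) - k * q : ℤ) : ℝ)| := by
      rw [← Int.cast_abs]
      exact_mod_cast Int.one_le_abs hm
    have heq : t = ((2 * (x.val : ℤ) - k * q : ℤ) : ℝ) / q := by
      rw [ht]; push_cast; field_simp
    rw [heq, abs_div, abs_of_pos hq0]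
    gcongr
  have hθ : 2 * Real.pi * (x.val : ℝ) / q = Real.pi * t + k * Real.pi := by
    rw [ht]; field_simp; ring
  have habs : |Real.cos (2 * Real.pi * (x.val : ℝ) / q)| = |Real.cos (Real.pi * t)| := by
    rw [hθ, Real.cos_add_int_mul_pi, abs_mul]
    rcases Int.even_or_odd k with hk' | hk'
    · rw [hk'.neg_one_zpow, abs_one, one_mul]
    · rw [hk'.neg_one_zpow, abs_neg, abs_one, one_mul]
  rw [habs]
  have h1 : |Real.cos (Real.pi * t)| = Real.cos (Real.pi * |t|) := by
    rw [← Real.cos_abs (Real.pi * t), abs_mul, abs_of_pos Real.pi_pos]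
    refine abs_of_nonneg (Real.cos_nonneg_of_mem_Icc ⟨?_, ?_⟩)
    · nlinarith [Real.pi_pos, abs_nonneg t]
    · nlinarith [Real.pi_pos, abs_nonneg t]
  rw [h1]
  have h2 : Real.cos (Real.pi * |t|) ≤ Real.cos (Real.pi / q) := by
    apply Real.cos_le_cos_of_nonneg_of_le_pi (by positivity)
    · nlinarith [Real.pi_pos, abs_nonneg t]
    · calc Real.pi / q = Real.pi * (1 / q) := by ring
        _ ≤ Real.pi * |t| := mul_le_mul_of_nonneg_left htlb Real.pi_pos.le
  have h3 : Real.cos (Real.pi / q) ≤ 1 - 2 / (q : ℝ) ^ 2 := by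
    have hb := Real.cos_le_one_sub_mul_cos_sq (x := Real.pi / q)
      (by rw [abs_of_pos (by positivity), div_le_iff₀ hq0]
          nlinarith [Real.pi_pos])
    have heq : 2 / Real.pi ^ 2 * (Real.pi / q) ^ 2 = 2 / (q : ℝ) ^ 2 := by
      have hπ : Real.pi ≠ 0 := Real.pi_ne_zero
      field_simp
    linarith [heq ▸ hb]
  have h4 : 1 - 2 / (q : ℝ) ^ 2 ≤ Real.exp (-2 / (q : ℝ) ^ 2) := by
    rw [neg_div]
    exact Real.one_sub_le_exp_neg _
  linarith [h2, h3, h4]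

/-- For an odd prime `q` and `a, ℓ ∈ (ℤ/qℤ)^n`,
`∏_{i<j} |cos(2π(ℓᵢaⱼ+ℓⱼaᵢ)/q)| ≤ e^(-2N(ℓ,a)/q²)`, where `N(ℓ,a)` is the
number of pairs `i < j` with `ℓᵢaⱼ + ℓⱼaᵢ ≠ 0` in `ℤ/qℤ`. -/
theorem cos_prod_bound (n q : ℕ) (hq : q.Prime) (hq2 : q ≠ 2) (hn : 1 ≤ n)
    (a ℓ : Fin n → ZMod q) :
    ∏ p ∈ Finset.univ.filter (fun p : Fin n × Fin n => p.1 < p.2),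
        |Real.cos (2 * Real.pi
          * ((ℓ p.1 * a p.2 + ℓ p.2 * a p.1 : ZMod q).val : ℝ) / q)|
      ≤ Real.exp (-(2 * ((Finset.univ.filter (fun p : Fin n × Fin n =>
            p.1 < p.2 ∧ ℓ p.1 * a p.2 + ℓ p.2 * a p.1 ≠ 0)).card : ℝ)) / (q : ℝ) ^ 2) := by
  set g : Fin n × Fin n → ℝ := fun p =>
    if ℓ p.1 * a p.2 + ℓ p.2 * a p.1 ≠ 0 then Real.exp (-2 / (q : ℝ) ^ 2) else 1 with hg
  have step1 : ∏ p ∈ Finset.univ.filter (fun p : Fin n × Fin n => p.1 < p.2),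
      |Real.cos (2 * Real.pi * ((ℓ p.1 * a p.2 + ℓ p.2 * a p.1 : ZMod q).val : ℝ) / q)|
      ≤ ∏ p ∈ Finset.univ.filter (fun p : Fin n × Fin n => p.1 < p.2), g p := by
    apply Finset.prod_le_prod (fun p _ => abs_nonneg _)
    intro p _
    by_cases h : ℓ p.1 * a p.2 + ℓ p.2 * a p.1 ≠ 0
    · simp only [hg, if_pos h]
      exact cos_key_bound q hq hq2 _ h
    · simp only [hg, if_neg h]
      push_neg at h
      simp [h]
  refine step1.trans ?_
  rw [Finset.prod_ite, Finset.prod_const, Finset.prod_const, one_pow, mul_one,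
    Finset.filter_filter]
  rw [← Real.exp_nat_mul]
  apply le_of_eq
  congr 1
  push_cast
  ring
end

section
/- For every constant C ≥ 3 the following holds: for every ε > 0 there exists N such that for all n ≥ N and every integer q with 2 ≤ q ≤ n^{1/2}/(log n)^C, one has Σ_{s=1}^{n} binom(n,s)·q^s·e^{−s·n/(q²·(log n)²)} + Σ_{s=⌈n/(log n)²⌉}^{n} binom(n,s)·q^s·e^{−s²/(20·q²)} ≤ ε. -/
open Real Finset

-- per-term bound: C(n,s)·q^s·e^{-E} ≤ 1/n² when E ≥ 4s·log n, q ≤ n, s ≥ 1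
lemma term_bd (n s q : ℕ) (hn : 1 ≤ n) (hqn : (q:ℝ) ≤ (n:ℝ)) (hq0 : (0:ℝ) ≤ q)
    (hs : 1 ≤ s) (E : ℝ) (hE : ((4*s : ℕ) : ℝ) * Real.log n ≤ E) :
    (n.choose s : ℝ) * (q:ℝ)^s * Real.exp (-E) ≤ 1/(n:ℝ)^2 := by
  have hn0 : (0:ℝ) < (n:ℝ) := by exact_mod_cast hn
  have hch : (n.choose s : ℝ) ≤ (n:ℝ)^s := by exact_mod_cast Nat.choose_le_pow n s
  have hqp : (q:ℝ)^s ≤ (n:ℝ)^s := pow_le_pow_left₀ hq0 hqn s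
  have hexp : Real.exp (-E) ≤ ((n:ℝ)^(4*s))⁻¹ := by
    rw [Real.exp_neg]
    have h1 : ((n:ℝ))^(4*s) ≤ Real.exp E := by
      calc ((n:ℝ))^(4*s) = Real.exp (Real.log n) ^ (4*s) := by rw [Real.exp_log hn0]
        _ = Real.exp (((4*s : ℕ):ℝ) * Real.log n) := by rw [← Real.exp_nat_mul]
        _ ≤ Real.exp E := Real.exp_le_exp.2 hE
    exact inv_anti₀ (by positivity) h1
  have h1 : (n.choose s : ℝ) * (q:ℝ)^s * Real.exp (-E)
      ≤ (n:ℝ)^s * (n:ℝ)^s * ((n:ℝ)^(4*s))⁻¹ := by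
    have h2 := (Real.exp_pos (-E)).le
    gcongr <;> positivity
  refine h1.trans ?_
  rw [← pow_add, div_eq_mul_inv, one_mul]
  have h2 : (n:ℝ)^2 ≤ (n:ℝ)^(4*s - (s+s)) := by
    apply pow_le_pow_right₀ (by exact_mod_cast hn); omega
  calc (n:ℝ)^(s+s) * ((n:ℝ)^(4*s))⁻¹ = ((n:ℝ)^(4*s-(s+s)))⁻¹ := by
        have h3 : (n:ℝ)^(4*s) = (n:ℝ)^(s+s) * (n:ℝ)^(4*s-(s+s)) := by
          rw [← pow_add]; congr 1; omega
        rw [h3, mul_inv, ← mul_assoc, mul_inv_cancel₀ (by positivity), one_mul]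
    _ ≤ ((n:ℝ)^2)⁻¹ := inv_anti₀ (by positivity) h2

set_option maxHeartbeats 1000000 in
/-- For every `C ≥ 3`, for every `ε > 0`, for all sufficiently large `n` and every
integer `2 ≤ q ≤ n^(1/2)/(log n)^C`, the error sum
`Σ_{s=1}^n C(n,s) q^s e^(-sn/(q²(log n)²)) + Σ_{s=⌈n/(log n)²⌉}^n C(n,s) q^s e^(-s²/(20q²))`
is at most `ε`. -/
theorem error_sum_small (C : ℝ) (hC : 3 ≤ C) :
    ∀ ε > (0 : ℝ), ∃ N : ℕ, ∀ n : ℕ, N ≤ n → ∀ q : ℕ, 2 ≤ q →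
      (q : ℝ) ≤ Real.sqrt n / (Real.log n) ^ C →
      (∑ s ∈ Finset.Icc 1 n, (n.choose s : ℝ) * (q : ℝ) ^ s
          * Real.exp (-((s : ℝ) * n) / ((q : ℝ) ^ 2 * (Real.log n) ^ 2)))
      + (∑ s ∈ Finset.Icc ⌈(n : ℝ) / (Real.log n) ^ 2⌉₊ n,
          (n.choose s : ℝ) * (q : ℝ) ^ s
            * Real.exp (-(s : ℝ) ^ 2 / (20 * (q : ℝ) ^ 2)))
      ≤ ε := by
  intro ε hε
  refine ⟨max 149 ⌈2/ε⌉₊, fun n hn q hq2 hqle => ?_⟩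
  have hn149 : (149:ℕ) ≤ n := le_trans (le_max_left _ _) hn
  have hn1 : 1 ≤ n := by omega
  have hn0 : (0:ℝ) < (n:ℝ) := by exact_mod_cast Nat.lt_of_lt_of_le (by norm_num) hn149
  have hnε : (2/ε : ℝ) ≤ n := by
    have h : ⌈2/ε⌉₊ ≤ n := le_trans (le_max_right _ _) hn
    calc (2/ε : ℝ) ≤ (⌈2/ε⌉₊ : ℝ) := Nat.le_ceil _
      _ ≤ n := by exact_mod_cast h
  set L := Real.log n with hLdef
  have hL5 : 5 ≤ L := by
    rw [hLdef, Real.le_log_iff_exp_le hn0]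
    have h := Real.exp_one_lt_d9
    have h5 : Real.exp 5 = Real.exp 1 ^ 5 := by
      rw [← Real.exp_nat_mul]; norm_num
    have h6 : Real.exp 1 ^ 5 ≤ (2.7182818286:ℝ)^5 :=
      pow_le_pow_left₀ (Real.exp_pos 1).le h.le 5
    have h7 : (149:ℝ) ≤ (n:ℝ) := by exact_mod_cast hn149
    have h8 : (2.7182818286:ℝ)^5 ≤ 149 := by norm_num
    rw [h5]
    linarith
  have hL0 : (0:ℝ) < L := by linarith
  have hL1 : (1:ℝ) < L := by linarith
  have hq0 : (0:ℝ) < q := by positivity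
  have hq0' : (0:ℝ) < (q:ℝ)^2 := by positivity
  -- q * L^C ≤ √n
  have hrp : (0:ℝ) < L ^ C := Real.rpow_pos_of_pos hL0 C
  have h1 : (q:ℝ) * L^C ≤ Real.sqrt n := by
    rw [← le_div_iff₀ hrp]; exact hqle
  have hq2n : (q:ℝ)^2 * (L^C)^2 ≤ n := by
    have h2 : ((q:ℝ) * L^C)^2 ≤ (Real.sqrt n)^2 := by
      apply pow_le_pow_left₀ (by positivity) h1
    rw [Real.sq_sqrt hn0.le] at h2
    calc (q:ℝ)^2 * (L^C)^2 = ((q:ℝ) * L^C)^2 := by ring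
      _ ≤ (n:ℝ) := h2
  -- L^6 ≤ (L^C)^2
  have hLC6 : L^(6:ℕ) ≤ (L^C)^2 := by
    have e1 : (L^C)^2 = L^(C*2) := by
      rw [Real.rpow_mul hL0.le, Real.rpow_two]
    have e2 : L^((6:ℕ):ℝ) ≤ L^(C*2) := by
      apply Real.rpow_le_rpow_left_iff hL1 |>.2
      push_cast; linarith
    rw [Real.rpow_natCast] at e2
    rw [e1]; exact e2
  have hkey : (q:ℝ)^2 * L^2 * L^4 ≤ n := by
    calc (q:ℝ)^2 * L^2 * L^4 = (q:ℝ)^2 * L^(6:ℕ) := by ring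
      _ ≤ (q:ℝ)^2 * (L^C)^2 := by gcongr
      _ ≤ n := hq2n
  have hL80 : 80 * L ≤ L^4 := by
    have h3 : (125:ℝ) ≤ L^3 := by nlinarith
    nlinarith [mul_le_mul_of_nonneg_right h3 hL0.le]
  have hqn : (q:ℝ) ≤ (n:ℝ) := by
    have hq2r : (2:ℝ) ≤ (q:ℝ) := by exact_mod_cast hq2
    have a1 : (q:ℝ) ≤ (q:ℝ)^2 := by nlinarith
    have a2 : (q:ℝ)^2 ≤ (q:ℝ)^2 * (L^2*L^4) :=
      le_mul_of_one_le_right (by positivity) (by nlinarith)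
    nlinarith [hkey]
  -- first sum
  have hS1 : (∑ s ∈ Finset.Icc 1 n, (n.choose s : ℝ) * (q : ℝ) ^ s
          * Real.exp (-((s : ℝ) * n) / ((q : ℝ) ^ 2 * L ^ 2))) ≤ 1/(n:ℝ) := by
    calc _ ≤ ∑ s ∈ Finset.Icc 1 n, 1/(n:ℝ)^2 := by
          apply Finset.sum_le_sum
          intro s hs
          simp only [Finset.mem_Icc] at hs
          have harg : -((s : ℝ) * n) / ((q : ℝ) ^ 2 * L ^ 2)
              = -(((s : ℝ) * n) / ((q : ℝ) ^ 2 * L ^ 2)) := by ring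
          rw [harg]
          apply term_bd n s q hn1 hqn hq0.le hs.1
          have hd : L^4 ≤ (n:ℝ) / ((q:ℝ)^2 * L^2) := by
            rw [le_div_iff₀ (by positivity)]; nlinarith [hkey]
          have hs0 : (1:ℝ) ≤ (s:ℝ) := by exact_mod_cast hs.1
          push_cast
          calc 4*(s:ℝ)*L ≤ (s:ℝ) * L^4 := by nlinarith
            _ ≤ (s:ℝ) * ((n:ℝ) / ((q:ℝ)^2 * L^2)) := by
                apply mul_le_mul_of_nonneg_left hd (by linarith)
            _ = (s:ℝ) * n / ((q:ℝ)^2 * L^2) := by ring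
      _ = (n:ℝ) * (1/(n:ℝ)^2) := by
          rw [Finset.sum_const, Nat.card_Icc]
          simp [nsmul_eq_mul]
      _ = 1/(n:ℝ) := by field_simp
  -- second sum
  have hS2 : (∑ s ∈ Finset.Icc ⌈(n : ℝ) / L ^ 2⌉₊ n,
          (n.choose s : ℝ) * (q : ℝ) ^ s
            * Real.exp (-(s : ℝ) ^ 2 / (20 * (q : ℝ) ^ 2))) ≤ 1/(n:ℝ) := by
    have hceil : 1 ≤ ⌈(n : ℝ) / L ^ 2⌉₊ := by
      rw [Nat.one_le_ceil_iff]; positivity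
    calc _ ≤ ∑ s ∈ Finset.Icc ⌈(n : ℝ) / L ^ 2⌉₊ n, 1/(n:ℝ)^2 := by
          apply Finset.sum_le_sum
          intro s hs
          simp only [Finset.mem_Icc] at hs
          have hs1 : 1 ≤ s := le_trans hceil hs.1
          have hsr : (n:ℝ)/L^2 ≤ (s:ℝ) := by
            calc (n:ℝ)/L^2 ≤ (⌈(n : ℝ) / L ^ 2⌉₊ : ℝ) := Nat.le_ceil _
              _ ≤ (s:ℝ) := by exact_mod_cast hs.1
          have harg : -(s : ℝ)^2 / (20 * (q : ℝ) ^ 2)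
              = -((s : ℝ)^2 / (20 * (q : ℝ) ^ 2)) := by ring
          rw [harg]
          apply term_bd n s q hn1 hqn hq0.le hs1
          have hs' : (q:ℝ)^2*L^4 ≤ (s:ℝ) := by
            have h8 : (q:ℝ)^2*L^4 ≤ (n:ℝ)/L^2 := by
              rw [le_div_iff₀ (by positivity)]; nlinarith [hkey]
            linarith
          have hs0 : (0:ℝ) ≤ (s:ℝ) := by positivity
          push_cast
          rw [le_div_iff₀ (by positivity : (0:ℝ) < 20*(q:ℝ)^2)]
          have c1 : (s:ℝ)*((q:ℝ)^2*(80*L)) ≤ (s:ℝ)*((q:ℝ)^2*L^4) := by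
            apply mul_le_mul_of_nonneg_left _ hs0
            apply mul_le_mul_of_nonneg_left hL80 (by positivity)
          have c2 : (s:ℝ)*((q:ℝ)^2*L^4) ≤ (s:ℝ)*(s:ℝ) := by
            apply mul_le_mul_of_nonneg_left hs' hs0
          nlinarith [c1, c2]
      _ ≤ (n:ℝ) * (1/(n:ℝ)^2) := by
          rw [Finset.sum_const, nsmul_eq_mul]
          apply mul_le_mul_of_nonneg_right _ (by positivity)
          rw [Nat.card_Icc]
          have : n + 1 - ⌈(n : ℝ) / L ^ 2⌉₊ ≤ n := by omega
          exact_mod_cast this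
      _ = 1/(n:ℝ) := by field_simp
  have hfin : (2:ℝ)/(n:ℝ) ≤ ε := by
    rw [div_le_iff₀ hn0]
    rw [div_le_iff₀ hε] at hnε
    nlinarith
  calc _ ≤ 1/(n:ℝ) + 1/(n:ℝ) := add_le_add hS1 hS2
    _ = 2/(n:ℝ) := by ring
    _ ≤ ε := hfin
end
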